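/- arXiv:2107.08851 — 6 statements merged into one kernel-verified Lean document; each statement's English description precedes it below -/
import Mathlib

section
/- Let F be the free group on x_1, …, x_{2g}, γ and let f_* be an endomorphism of the subgroup ⟨x_1,…,x_{2g}⟩ such that f_*([x_1,x_2]⋯[x_{2g−1},x_{2g}]) = q ([x_1,x_2]⋯[x_{2g−1},x_{2g}]) q⁻¹ for some q ∈ ⟨x_1,…,x_{2g}⟩. Define r_i = γ f_*(x_i) γ⁻¹ x_i⁻¹ for i ≤ 2g, r_{2g+1} = [x_1,x_2]⋯[x_{2g−1},x_{2g}], w_i = Π_{j=1}^i [x_{2j−1},x_{2j}], and W_i = w_{i−1} r_{2i−1} w_{i−1}⁻¹ · (w_{i−1}x_{2i−1}) r_{2i} (w_{i−1}x_{2i−1})⁻¹ · (w_i x_{2i}) r_{2i−1}⁻¹ (w_i x_{2i})⁻¹ · w_i r_{2i}⁻¹ w_i⁻¹. Then (Π_{i=1}^g W_i) · r_{2g+1} · (γ q r_{2g+1}⁻¹ q⁻¹ γ⁻¹) = 1 in F. -/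
open scoped commutatorElement

/-!
Write `c_i = [x_{2i-1}, x_{2i}]`, so that `w_i = w_{i-1} c_i`. Substituting
`r_j = γ f_*(x_j) γ⁻¹ x_j⁻¹`, each block collapses in any group to
`W_i = w_{i-1} · γ [f_*(x_{2i-1}), f_*(x_{2i})] γ⁻¹ · w_i⁻¹`, so the product of the `W_i`
telescopes to `γ f_*(r_{2g+1}) γ⁻¹ · w_g⁻¹`. Since `w_g = r_{2g+1}` and
`f_*(r_{2g+1}) = q r_{2g+1} q⁻¹`, the remaining factors cancel.
-/

section

variable {G : Type*} [Group G]

theorem mul_conj_relator_block_eq (γ a b fa fb w : G) :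
    let ra := γ * fa * γ⁻¹ * a⁻¹
    let rb := γ * fb * γ⁻¹ * b⁻¹
    w * ra * w⁻¹ * ((w * a) * rb * (w * a)⁻¹)
      * ((w * ⁅a, b⁆ * b) * ra⁻¹ * (w * ⁅a, b⁆ * b)⁻¹)
      * (w * ⁅a, b⁆ * rb⁻¹ * (w * ⁅a, b⁆)⁻¹)
      = w * (γ * ⁅fa, fb⁆ * γ⁻¹) * (w * ⁅a, b⁆)⁻¹ := by
  simp only [commutatorElement_def]
  group

theorem List.prod_range_map_mul_mul_inv_succ (a d : ℕ → G) (n : ℕ) :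
    ((List.range n).map fun j => a j * d j * (a (j + 1))⁻¹).prod
      = a 0 * ((List.range n).map d).prod * (a n)⁻¹ := by
  induction n with
  | zero => simp
  | succ n ih =>
    rw [List.prod_range_succ, List.prod_range_succ, ih]
    group

theorem List.prod_range_map_conj (γ : G) (c : ℕ → G) (n : ℕ) :
    ((List.range n).map fun j => γ * c j * γ⁻¹).prod
      = γ * ((List.range n).map c).prod * γ⁻¹ := by
  rw [← MulAut.conj_apply, map_list_prod, List.map_map]
  rfl

end

theorem mapping_torus_identity_general (g : ℕ)
    (x : ℕ → FreeGroup (Fin (2*g) ⊕ Unit))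
    (γ : FreeGroup (Fin (2*g) ⊕ Unit))
    (f : ℕ → FreeGroup (Fin (2*g) ⊕ Unit))
    (q : FreeGroup (Fin (2*g) ⊕ Unit))
    (hconj : ((List.range g).map fun j => ⁅f (2*j), f (2*j+1)⁆).prod
      = q * (((List.range g).map fun j => ⁅x (2*j), x (2*j+1)⁆).prod) * q⁻¹)
    (r : ℕ → FreeGroup (Fin (2*g) ⊕ Unit))
    (hr : ∀ n, r n = γ * f n * γ⁻¹ * (x n)⁻¹)
    (w : ℕ → FreeGroup (Fin (2*g) ⊕ Unit))
    (hw : ∀ i, w i = ((List.range i).map fun j => ⁅x (2*j), x (2*j+1)⁆).prod)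
    (W : ℕ → FreeGroup (Fin (2*g) ⊕ Unit))
    (hW : ∀ i, W i =
      w (i-1) * r (2*(i-1)) * (w (i-1))⁻¹
      * ((w (i-1) * x (2*(i-1))) * r (2*(i-1)+1) * (w (i-1) * x (2*(i-1)))⁻¹)
      * ((w i * x (2*(i-1)+1)) * (r (2*(i-1)))⁻¹ * (w i * x (2*(i-1)+1))⁻¹)
      * (w i * (r (2*(i-1)+1))⁻¹ * (w i)⁻¹)) :
    ((List.range g).map fun k => W (k+1)).prod * (w g)
      * (γ * q * (w g)⁻¹ * q⁻¹ * γ⁻¹) = 1 := by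
  have hw_succ (k : ℕ) : w (k + 1) = w k * ⁅x (2*k), x (2*k+1)⁆ := by
    rw [hw, hw, List.prod_range_succ]
  have hW_succ (k : ℕ) :
      W (k + 1) = w k * (γ * ⁅f (2*k), f (2*k+1)⁆ * γ⁻¹) * (w (k + 1))⁻¹ := by
    rw [hW, Nat.add_sub_cancel, hr, hr, hw_succ]
    exact mul_conj_relator_block_eq γ _ _ _ _ (w k)
  rw [List.map_congr_left fun k _ => hW_succ k, List.prod_range_map_mul_mul_inv_succ,
    List.prod_range_map_conj, hconj, ← hw g, hw 0, List.range_zero, List.map_nil,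
    List.prod_nil]
  group

/-- The word `W = (Π_{i=1}^g W_i) · r_{2g+1} · (γ q r_{2g+1}⁻¹ q⁻¹ γ⁻¹)` associated with a
mapping torus of a genus-`g` surface diffeomorphism evaluates to `1` in the free group `F`
on `x_1, …, x_{2g}, γ`, where `r_i = γ f_*(x_i) γ⁻¹ x_i⁻¹`, `r_{2g+1} = [x_1,x_2]⋯[x_{2g−1},x_{2g}]`,
`w_i = Π_{j=1}^i [x_{2j−1},x_{2j}]`, and `f_*` satisfies
`f_*([x_1,x_2]⋯[x_{2g−1},x_{2g}]) = q ([x_1,x_2]⋯[x_{2g−1},x_{2g}]) q⁻¹`.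
(Indices are 0-based here: `x_{2i-1}` is `x (2*(i-1))`.) -/
theorem mapping_torus_identity (g : ℕ)
    (x : ℕ → FreeGroup (Fin (2*g) ⊕ Unit))
    (hx : ∀ (n : ℕ) (h : n < 2*g), x n = FreeGroup.of (Sum.inl ⟨n, h⟩))
    (γ : FreeGroup (Fin (2*g) ⊕ Unit))
    (hγ : γ = FreeGroup.of (Sum.inr ()))
    (f : ℕ → FreeGroup (Fin (2*g) ⊕ Unit))
    (hf : ∀ n, n < 2*g →
      f n ∈ Subgroup.closure (Set.range fun j : Fin (2*g) => FreeGroup.of (Sum.inl j)))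
    (q : FreeGroup (Fin (2*g) ⊕ Unit))
    (hq : q ∈ Subgroup.closure (Set.range fun j : Fin (2*g) => FreeGroup.of (Sum.inl j)))
    (hconj : ((List.range g).map fun j => ⁅f (2*j), f (2*j+1)⁆).prod
      = q * (((List.range g).map fun j => ⁅x (2*j), x (2*j+1)⁆).prod) * q⁻¹)
    (r : ℕ → FreeGroup (Fin (2*g) ⊕ Unit))
    (hr : ∀ n, r n = γ * f n * γ⁻¹ * (x n)⁻¹)
    (w : ℕ → FreeGroup (Fin (2*g) ⊕ Unit))
    (hw : ∀ i, w i = ((List.range i).map fun j => ⁅x (2*j), x (2*j+1)⁆).prod)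
    (W : ℕ → FreeGroup (Fin (2*g) ⊕ Unit))
    (hW : ∀ i, W i =
      w (i-1) * r (2*(i-1)) * (w (i-1))⁻¹
      * ((w (i-1) * x (2*(i-1))) * r (2*(i-1)+1) * (w (i-1) * x (2*(i-1)))⁻¹)
      * ((w i * x (2*(i-1)+1)) * (r (2*(i-1)))⁻¹ * (w i * x (2*(i-1)+1))⁻¹)
      * (w i * (r (2*(i-1)+1))⁻¹ * (w i)⁻¹)) :
    ((List.range g).map fun k => W (k+1)).prod * (w g)
      * (γ * q * (w g)⁻¹ * q⁻¹ * γ⁻¹) = 1 :=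
  mapping_torus_identity_general g x γ f q hconj r hr w hw W hW
end

section
/- Let F be the free group on x_1, …, x_n with n ≥ 1, fix integers a ≥ 1, a_1, …, a_n ≥ 2 and signs ε_1, …, ε_n ∈ {±1}, and set r_i = (x_i x_{i+1} ⋯ x_n x_1 ⋯ x_{i−1})^{−a} · x_i^{ε_i a_i}. Then r_1 (x_1⁻¹ r_1⁻¹ x_1) r_2 (x_2⁻¹ r_2⁻¹ x_2) ⋯ r_n (x_n⁻¹ r_n⁻¹ x_n) = 1 in F. -/
/-- In the free group `F` on `x_1, …, x_n` (`n ≥ 1`), with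
`r_i = (x_i x_{i+1} ⋯ x_n x_1 ⋯ x_{i−1})^{−a} · x_i^{ε_i a_i}` (indices cyclic mod `n`),
the word `r_1 (x_1⁻¹ r_1⁻¹ x_1) r_2 (x_2⁻¹ r_2⁻¹ x_2) ⋯ r_n (x_n⁻¹ r_n⁻¹ x_n)` equals `1`. -/
theorem seifert_identity (n : ℕ) (hn : 1 ≤ n)
    (a : ℤ) (ha : 1 ≤ a)
    (aa : ℕ → ℤ) (haa : ∀ i, i < n → 2 ≤ aa i)
    (ε : ℕ → ℤ) (hε : ∀ i, i < n → ε i = 1 ∨ ε i = -1)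
    (x : ℕ → FreeGroup (Fin n))
    (hx : ∀ i : ℕ, x i = FreeGroup.of ⟨i % n, Nat.mod_lt i hn⟩)
    (c : ℕ → FreeGroup (Fin n))
    (hc : ∀ i, c i = ((List.range n).map fun j => x (i + j)).prod)
    (r : ℕ → FreeGroup (Fin n))
    (hr : ∀ i, r i = (c i) ^ (-a) * (x i) ^ (ε i * aa i)) :
    ((List.range n).map fun k =>
      r (k+1) * ((x (k+1))⁻¹ * (r (k+1))⁻¹ * x (k+1))).prod = 1 := by
  -- periodicity of x
  have hxp : ∀ i, x (i + n) = x i := by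
    intro i
    rw [hx, hx]
    congr 1
    exact Fin.ext (by simp [Nat.add_mod_right])
  -- the shift relation for c
  obtain ⟨m, rfl⟩ : ∃ m, n = m + 1 := ⟨n - 1, (Nat.succ_pred_eq_of_pos hn).symm⟩
  have hcs : ∀ i, c (i + 1) = (x i)⁻¹ * c i * x i := by
    intro i
    have h1 : c i = x i * ((List.range m).map fun j => x (i + 1 + j)).prod := by
      rw [hc, List.range_succ_eq_map, List.map_cons, List.prod_cons, List.map_map]
      refine congrArg₂ _ rfl ?_
      refine congrArg List.prod (List.map_congr_left fun j _ => ?_)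
      simp only [Function.comp_apply]
      congr 1
      omega
    have h2 : c (i + 1) = ((List.range m).map fun j => x (i + 1 + j)).prod * x i := by
      rw [hc, List.range_succ, List.map_append, List.prod_append, List.map_singleton,
        List.prod_singleton]
      congr 1
      have : i + 1 + m = i + (m + 1) := by omega
      rw [this, hxp]
    rw [h1, h2]
    group
  -- periodicity of c
  have hcp : c (1 + (m + 1)) = c 1 := by
    rw [hc, hc]
    congr 1
    refine List.map_congr_left fun j _ => ?_
    have : 1 + (m + 1) + j = 1 + j + (m + 1) := by omega
    rw [this, hxp]
  -- each term simplifies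
  have hterm : ∀ k : ℕ, r (k+1) * ((x (k+1))⁻¹ * (r (k+1))⁻¹ * x (k+1))
      = ((c (k+1)) ^ a)⁻¹ * (c (k+1+1)) ^ a := by
    intro k
    have hconj : ((x (k+1))⁻¹ * c (k+1) * x (k+1)) ^ a
        = (x (k+1))⁻¹ * (c (k+1)) ^ a * x (k+1) := by
      simpa using conj_zpow (i := a) (a := (x (k+1))⁻¹) (b := c (k+1))
    rw [hr, hcs (k+1), hconj]
    group
  -- telescoping
  have tel : ∀ (N : ℕ) (g : ℕ → FreeGroup (Fin (m+1))),
      ((List.range N).map fun k => (g k)⁻¹ * g (k+1)).prod = (g 0)⁻¹ * g N := by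
    intro N g
    induction N with
    | zero => simp
    | succ N ih =>
        rw [List.range_succ, List.map_append, List.prod_append, ih, List.map_singleton,
          List.prod_singleton]
        group
  have : ((List.range (m+1)).map fun k =>
      r (k+1) * ((x (k+1))⁻¹ * (r (k+1))⁻¹ * x (k+1))).prod
      = ((List.range (m+1)).map fun k => ((c (k+1)) ^ a)⁻¹ * (c (k+1+1)) ^ a).prod := by
    congr 1
    exact List.map_congr_left fun k _ => hterm k
  rw [this]
  have := tel (m+1) (fun k => (c (k+1)) ^ a)
  rw [this]
  have h1n : (m + 1) + 1 = 1 + (m + 1) := by omega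
  rw [h1n, hcp]
  group
end

section
/- Let d ≥ 2 and let G be the group with presentation ⟨x_1^{(i)}, x_2^{(i)} (i ∈ ℤ/d) | x_1^{(i)} x_2^{(i)} = x_1^{(i+1)}, x_2^{(i)} x_1^{(i)} x_2^{(i)} = x_2^{(i+1)} (i ∈ ℤ/d)⟩. Then G is isomorphic to the cyclically presented group ⟨y_1, …, y_d | y_i⁻¹ y_{i+1}² y_{i+2}⁻¹ y_{i+1} (i ∈ ℤ/d)⟩, via the map sending x_1^{(i)} to y_i (indices mod d). -/
/-!
The presentation of the branched cover is a Tietze transform of the cyclic one: the first family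
of relations expresses `x₂⁽ⁱ⁾` as `(x₁⁽ⁱ⁾)⁻¹ x₁⁽ⁱ⁺¹⁾`, and substituting this into the second
family `x₂⁽ⁱ⁾ x₁⁽ⁱ⁾ x₂⁽ⁱ⁾ = x₂⁽ⁱ⁺¹⁾` leaves exactly the cyclic relator in the `yᵢ = x₁⁽ⁱ⁾`.
-/

namespace FigureEight

open PresentedGroup

variable {d : ℕ}

/-- `(i, false)` stands for `x₁⁽ⁱ⁾` and `(i, true)` for `x₂⁽ⁱ⁾`. -/
def branchedCoverRels (d : ℕ) : Set (FreeGroup (ZMod d × Bool)) :=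
  (Set.range fun i : ZMod d =>
    FreeGroup.of (i, false) * FreeGroup.of (i, true) * (FreeGroup.of (i+1, false))⁻¹)
  ∪ (Set.range fun i : ZMod d =>
    FreeGroup.of (i, true) * FreeGroup.of (i, false) * FreeGroup.of (i, true)
      * (FreeGroup.of (i+1, true))⁻¹)

def cyclicRels (d : ℕ) : Set (FreeGroup (ZMod d)) :=
  Set.range fun i : ZMod d =>
    (FreeGroup.of i)⁻¹ * (FreeGroup.of (i+1)) ^ 2 * (FreeGroup.of (i+2))⁻¹ * FreeGroup.of (i+1)

theorem of_false_mul_of_true (i : ZMod d) :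
    (of (i, false) * of (i, true) : PresentedGroup (branchedCoverRels d)) = of (i + 1, false) := by
  have h := one_of_mem (rels := branchedCoverRels d) (Or.inl ⟨i, rfl⟩)
  simp only [map_mul, map_inv] at h
  exact mul_inv_eq_one.mp h

theorem of_true_mul_of_false_mul_of_true (i : ZMod d) :
    (of (i, true) * of (i, false) * of (i, true) : PresentedGroup (branchedCoverRels d)) =
      of (i + 1, true) := by
  have h := one_of_mem (rels := branchedCoverRels d) (Or.inr ⟨i, rfl⟩)
  simp only [map_mul, map_inv] at h
  exact mul_inv_eq_one.mp h

theorem cyclic_relator_eq_one (i : ZMod d) :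
    ((of i)⁻¹ * of (i + 1) ^ 2 * (of (i + 2))⁻¹ * of (i + 1) : PresentedGroup (cyclicRels d)) =
      1 := by
  have h := one_of_mem (rels := cyclicRels d) ⟨i, rfl⟩
  simp only [map_mul, map_inv, map_pow] at h
  exact h

def branchedCoverGenImage (p : ZMod d × Bool) : PresentedGroup (cyclicRels d) :=
  bif p.2 then (of p.1)⁻¹ * of (p.1 + 1) else of p.1

theorem lift_branchedCoverGenImage_eq_one :
    ∀ r ∈ branchedCoverRels d, FreeGroup.lift branchedCoverGenImage r = 1 := by
  rintro r (⟨i, rfl⟩ | ⟨i, rfl⟩) <;>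
    simp only [map_mul, map_inv, FreeGroup.lift_apply_of, branchedCoverGenImage, cond_true,
      cond_false]
  · group
  · rw [← cyclic_relator_eq_one i, pow_two]
    group

theorem lift_of_false_eq_one :
    ∀ r ∈ cyclicRels d,
      FreeGroup.lift (fun i => (of (i, false) : PresentedGroup (branchedCoverRels d))) r = 1 := by
  rintro r ⟨i, rfl⟩
  simp only [map_mul, map_inv, map_pow, FreeGroup.lift_apply_of]
  rw [show i + 2 = i + 1 + 1 by ring, pow_two, ← of_false_mul_of_true (i + 1),
    ← of_false_mul_of_true i, ← of_true_mul_of_false_mul_of_true i]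
  group

def toCyclic : PresentedGroup (branchedCoverRels d) →* PresentedGroup (cyclicRels d) :=
  toGroup lift_branchedCoverGenImage_eq_one

def ofCyclic : PresentedGroup (cyclicRels d) →* PresentedGroup (branchedCoverRels d) :=
  toGroup lift_of_false_eq_one

theorem toCyclic_of (p : ZMod d × Bool) : toCyclic (of p) = branchedCoverGenImage p :=
  toGroup.of _

theorem ofCyclic_of (i : ZMod d) : ofCyclic (of i) = of (i, false) :=
  toGroup.of _

theorem ofCyclic_comp_toCyclic :
    ofCyclic.comp toCyclic = MonoidHom.id (PresentedGroup (branchedCoverRels d)) := by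
  ext ⟨i, _ | _⟩
  · exact ofCyclic_of i
  · rw [MonoidHom.comp_apply, toCyclic_of, branchedCoverGenImage, cond_true, map_mul, map_inv,
      ofCyclic_of, ofCyclic_of, ← of_false_mul_of_true, inv_mul_cancel_left, MonoidHom.id_apply]

theorem toCyclic_comp_ofCyclic :
    toCyclic.comp ofCyclic = MonoidHom.id (PresentedGroup (cyclicRels d)) :=
  PresentedGroup.ext fun i => by
    rw [MonoidHom.comp_apply, ofCyclic_of, toCyclic_of]
    rfl

def branchedCoverEquivCyclic :
    PresentedGroup (branchedCoverRels d) ≃* PresentedGroup (cyclicRels d) :=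
  MonoidHom.toMulEquiv toCyclic ofCyclic ofCyclic_comp_toCyclic toCyclic_comp_ofCyclic

end FigureEight

open FigureEight in
theorem figure_eight_branched_cover_iso_general (d : ℕ)
    (rels₁ : Set (FreeGroup (ZMod d × Bool)))
    (h₁ : rels₁ =
      (Set.range fun i : ZMod d =>
        FreeGroup.of (i, false) * FreeGroup.of (i, true) * (FreeGroup.of (i+1, false))⁻¹)
      ∪ (Set.range fun i : ZMod d =>
        FreeGroup.of (i, true) * FreeGroup.of (i, false) * FreeGroup.of (i, true)
          * (FreeGroup.of (i+1, true))⁻¹))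
    (rels₂ : Set (FreeGroup (ZMod d)))
    (h₂ : rels₂ = Set.range fun i : ZMod d =>
      (FreeGroup.of i)⁻¹ * (FreeGroup.of (i+1)) ^ 2 * (FreeGroup.of (i+2))⁻¹
        * FreeGroup.of (i+1)) :
    ∃ e : PresentedGroup rels₁ ≃* PresentedGroup rels₂,
      ∀ i : ZMod d, e (PresentedGroup.of (i, false)) = PresentedGroup.of i := by
  subst h₁ h₂
  exact ⟨branchedCoverEquivCyclic (d := d), fun i => toCyclic_of (i, false)⟩

/-- The fundamental group of the `d`-fold cyclic branched cover of `S³` branched over the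
figure-eight knot, presented as
`⟨x₁⁽ⁱ⁾, x₂⁽ⁱ⁾ (i ∈ ℤ/d) | x₁⁽ⁱ⁾x₂⁽ⁱ⁾ = x₁⁽ⁱ⁺¹⁾, x₂⁽ⁱ⁾x₁⁽ⁱ⁾x₂⁽ⁱ⁾ = x₂⁽ⁱ⁺¹⁾⟩`,
is isomorphic to the cyclically presented group
`⟨y₁, …, y_d | yᵢ⁻¹ yᵢ₊₁² yᵢ₊₂⁻¹ yᵢ₊₁⟩` via `x₁⁽ⁱ⁾ ↦ yᵢ`.
Here `x₁⁽ⁱ⁾ = of (i, false)` and `x₂⁽ⁱ⁾ = of (i, true)`. -/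
theorem figure_eight_branched_cover_iso (d : ℕ) (hd : 2 ≤ d)
    (rels₁ : Set (FreeGroup (ZMod d × Bool)))
    (h₁ : rels₁ =
      (Set.range fun i : ZMod d =>
        FreeGroup.of (i, false) * FreeGroup.of (i, true) * (FreeGroup.of (i+1, false))⁻¹)
      ∪ (Set.range fun i : ZMod d =>
        FreeGroup.of (i, true) * FreeGroup.of (i, false) * FreeGroup.of (i, true)
          * (FreeGroup.of (i+1, true))⁻¹))
    (rels₂ : Set (FreeGroup (ZMod d)))
    (h₂ : rels₂ = Set.range fun i : ZMod d =>
      (FreeGroup.of i)⁻¹ * (FreeGroup.of (i+1)) ^ 2 * (FreeGroup.of (i+2))⁻¹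
        * FreeGroup.of (i+1)) :
    ∃ e : PresentedGroup rels₁ ≃* PresentedGroup rels₂,
      ∀ i : ZMod d, e (PresentedGroup.of (i, false)) = PresentedGroup.of i :=
  figure_eight_branched_cover_iso_general d rels₁ h₁ rels₂ h₂
end

section
/- Let n ≥ 1, let A ∈ Mat(n×n, ℤ) with Δ := det A ≠ 0. Write Ker(A)_{ℤ/Δ} = {v ∈ (ℤ/Δ)^n : Av = 0}. Then the map ℤ^n/Aℤ^n → Ker(A)_{ℤ/Δ} induced by v ↦ adj(A)·v (reduced mod Δ) is a well-defined group isomorphism, where adj(A) is the adjugate matrix of A. -/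
open Matrix

/-- Let `A` be an `n×n` integer matrix with `Δ := det A ≠ 0`. Then the map
`v ↦ adj(A)·v (mod Δ)` induces a group isomorphism from the cokernel `ℤⁿ/Aℤⁿ` onto
`Ker(A)_{ℤ/Δ} = {v ∈ (ℤ/Δ)ⁿ : Av = 0}`. -/
theorem cokernel_iso_kernel_modDet (n : ℕ) (hn : 1 ≤ n)
    (A : Matrix (Fin n) (Fin n) ℤ) (hA : A.det ≠ 0) :
    ∃ e : ((Fin n → ℤ) ⧸ (A.mulVecLin.toAddMonoidHom.range)) ≃+
      ((Matrix.mulVecLin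
        (A.map ((↑) : ℤ → ZMod A.det.natAbs))).toAddMonoidHom.ker),
      ∀ v : Fin n → ℤ,
        ((e (QuotientAddGroup.mk v) : Fin n → ZMod A.det.natAbs))
          = fun i => (((A.adjugate *ᵥ v) i : ℤ) : ZMod A.det.natAbs) := by
  classical
  set Δ := A.det with hΔ
  set m := Δ.natAbs with hm
  set π : ℤ →+* ZMod m := Int.castRingHom (ZMod m) with hπ
  have hzero : ∀ x : ℤ, (π x = 0 ↔ Δ ∣ x) := by
    intro x
    rw [hπ]
    simp only [Int.coe_castRingHom]
    rw [ZMod.intCast_zmod_eq_zero_iff_dvd, Int.natAbs_dvd]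
  -- the underlying additive hom
  let f : (Fin n → ℤ) →+ (Fin n → ZMod m) :=
    { toFun := fun v => fun i => π ((A.adjugate *ᵥ v) i)
      map_zero' := by
        funext i
        show π ((A.adjugate *ᵥ 0) i) = 0
        rw [Matrix.mulVec_zero]
        simp
      map_add' := by
        intro v w
        funext i
        show π ((A.adjugate *ᵥ (v + w)) i) = π ((A.adjugate *ᵥ v) i) + π ((A.adjugate *ᵥ w) i)
        rw [Matrix.mulVec_add]
        simp }
  -- f lands in the kernel
  have hker : ∀ v, f v ∈ (Matrix.mulVecLin
      (A.map ((↑) : ℤ → ZMod m))).toAddMonoidHom.ker := by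
    intro v
    show (A.map π) *ᵥ (fun i => π ((A.adjugate *ᵥ v) i)) = 0
    funext i
    have : (fun i => π ((A.adjugate *ᵥ v) i)) = π ∘ (A.adjugate *ᵥ v) := rfl
    rw [this, ← RingHom.map_mulVec, Matrix.mulVec_mulVec, Matrix.mul_adjugate,
      Matrix.smul_mulVec, Matrix.one_mulVec]
    have : (Δ • v) i = Δ * v i := rfl
    rw [this, _root_.map_mul]
    have : π Δ = 0 := (hzero Δ).2 dvd_rfl
    rw [this, zero_mul]
    rfl
  let f' : (Fin n → ℤ) →+ ((Matrix.mulVecLin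
      (A.map ((↑) : ℤ → ZMod m))).toAddMonoidHom.ker) :=
    f.codRestrict _ hker
  -- range A is in the kernel of f'
  have hrange : A.mulVecLin.toAddMonoidHom.range ≤ f'.ker := by
    rintro x ⟨w, rfl⟩
    have : f (A *ᵥ w) = 0 := by
      funext i
      show π ((A.adjugate *ᵥ (A *ᵥ w)) i) = 0
      rw [Matrix.mulVec_mulVec, Matrix.adjugate_mul, Matrix.smul_mulVec,
        Matrix.one_mulVec]
      exact (hzero _).2 ⟨w i, rfl⟩
    exact Subtype.ext this
  let g := QuotientAddGroup.lift _ f' hrange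
  have hg : ∀ v : Fin n → ℤ, g (QuotientAddGroup.mk v) = f' v := fun _ => rfl
  have hinj : Function.Injective g := by
    rw [injective_iff_map_eq_zero]
    intro x
    induction x using QuotientAddGroup.induction_on with
    | H v =>
      intro hx
      have hf : ∀ i, Δ ∣ (A.adjugate *ᵥ v) i := by
        intro i
        have := congrArg (Subtype.val) hx
        have h2 : π ((A.adjugate *ᵥ v) i) = 0 := congrFun this i
        exact (hzero _).1 h2
      choose u hu using hf
      have hv : v = A *ᵥ u := by
        have hAu : A.adjugate *ᵥ v = Δ • u := funext fun i => (hu i).trans rfl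
        have h1 : A *ᵥ (A.adjugate *ᵥ v) = Δ • v := by
          rw [Matrix.mulVec_mulVec, Matrix.mul_adjugate, Matrix.smul_mulVec,
            Matrix.one_mulVec]
        rw [hAu, Matrix.mulVec_smul] at h1
        replace h1 : Δ • v = Δ • (A *ᵥ u) := h1.symm
        funext i
        have := congrFun h1 i
        exact mul_left_cancel₀ hA this
      rw [QuotientAddGroup.eq_zero_iff]
      exact ⟨u, hv.symm⟩
  have hsurj : Function.Surjective g := by
    rintro ⟨w, hw⟩
    have hlift : ∀ i, ∃ x : ℤ, π x = w i := fun i => ZMod.intCast_surjective (w i)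
    choose s hs using hlift
    have hAs : ∀ i, Δ ∣ (A *ᵥ s) i := by
      intro i
      rw [← hzero]
      have : π ((A *ᵥ s) i) = ((A.map π) *ᵥ (π ∘ s)) i := RingHom.map_mulVec π A s i
      rw [this]
      have hps : π ∘ s = w := funext hs
      rw [hps]
      have : (A.map π) *ᵥ w = 0 := hw
      rw [this]
      rfl
    choose t ht using hAs
    have hadj : A.adjugate *ᵥ t = s := by
      have hAs' : A *ᵥ s = Δ • t := funext fun i => (ht i).trans rfl
      have h1 : A.adjugate *ᵥ (A *ᵥ s) = Δ • s := by
        rw [Matrix.mulVec_mulVec, Matrix.adjugate_mul, Matrix.smul_mulVec,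
          Matrix.one_mulVec]
      rw [hAs', Matrix.mulVec_smul] at h1
      funext i
      exact mul_left_cancel₀ hA (congrFun h1 i)
    refine ⟨QuotientAddGroup.mk t, ?_⟩
    rw [hg]
    apply Subtype.ext
    show (fun i => π ((A.adjugate *ᵥ t) i)) = w
    rw [hadj]
    exact funext hs
  refine ⟨AddEquiv.ofBijective g ⟨hinj, hsurj⟩, ?_⟩
  intro v
  rfl
end

section
/- Let p be an odd integer not divisible by 3, let V = (1/2)·[[2p, p+1], [p−1, 2p]], and let A = [[−V, ᵗV], [ᵗV, −V]] (a 4×4 integer matrix). Then the cokernel ℤ⁴/ᵗAℤ⁴ is isomorphic to ℤ/p ⊕ ℤ/3p. -/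
open Matrix

set_option maxHeartbeats 2000000 in
/-- For the pretzel knot `P(p,p,p)` with `p` odd and not divisible by `3`: with Seifert
matrix `V = (1/2)·[[2p, p+1],[p−1, 2p]]` and `A = [[−V, ᵗV],[ᵗV, −V]]`, the cokernel
`ℤ⁴/ᵗAℤ⁴` is isomorphic to `ℤ/p ⊕ ℤ/3p`. -/
theorem pretzel_ppp_homology (p : ℤ) (hp : Odd p) (h3 : ¬ (3 ∣ p))
    (V : Matrix (Fin 2) (Fin 2) ℤ) (hV : (2 : ℤ) • V = !![2*p, p+1; p-1, 2*p])
    (A : Matrix (Fin 2 ⊕ Fin 2) (Fin 2 ⊕ Fin 2) ℤ)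
    (hA : A = Matrix.fromBlocks (-V) Vᵀ Vᵀ (-V)) :
    Nonempty ((((Fin 2 ⊕ Fin 2) → ℤ) ⧸ ((Aᵀ).mulVecLin.toAddMonoidHom.range)) ≃+
      (ZMod p.natAbs × ZMod (3*p).natAbs)) := by
  obtain ⟨k, hk⟩ := hp
  have hk' : p = 2*k + 1 := by omega
  clear hk; subst hk'
  subst hA
  have h00 := Matrix.ext_iff.mpr hV 0 0
  have h01 := Matrix.ext_iff.mpr hV 0 1
  have h10 := Matrix.ext_iff.mpr hV 1 0
  have h11 := Matrix.ext_iff.mpr hV 1 1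
  simp [Matrix.smul_apply] at h00 h01 h10 h11
  have hV' : V = !![2*k+1, k+1; k, 2*k+1] := by
    ext i j
    fin_cases i <;> fin_cases j <;> simp <;> omega
  subst hV'
  clear hV h00 h01 h10 h11
  -- explicit transpose
  have hAT : (Matrix.fromBlocks (-(!![2*k+1, k+1; k, 2*k+1] : Matrix (Fin 2) (Fin 2) ℤ))
      (!![2*k+1, k+1; k, 2*k+1] : Matrix (Fin 2) (Fin 2) ℤ)ᵀ
      (!![2*k+1, k+1; k, 2*k+1] : Matrix (Fin 2) (Fin 2) ℤ)ᵀ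
      (-(!![2*k+1, k+1; k, 2*k+1] : Matrix (Fin 2) (Fin 2) ℤ)))ᵀ
      = Matrix.fromBlocks !![-(2*k+1), -k; -(k+1), -(2*k+1)] !![2*k+1, k+1; k, 2*k+1]
          !![2*k+1, k+1; k, 2*k+1] !![-(2*k+1), -k; -(k+1), -(2*k+1)] := by
    ext i j
    rcases i with i | i <;> rcases j with j | j <;> fin_cases i <;> fin_cases j <;>
      simp [Matrix.fromBlocks, Matrix.transpose_apply, Matrix.vecHead, Matrix.vecTail]
  rw [hAT]
  clear hAT
  -- Smith normal form data
  set L : Matrix (Fin 2 ⊕ Fin 2) (Fin 2 ⊕ Fin 2) ℤ :=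
    Matrix.fromBlocks !![-(2*k+1), -k; -(k+1), -(2*k+1)] !![2, -1; 1, 0]
                      !![2*k+1, k+1; k, 2*k+1] !![-2, 1; -1, 0] with hLdef
  set Linv : Matrix (Fin 2 ⊕ Fin 2) (Fin 2 ⊕ Fin 2) ℤ :=
    Matrix.fromBlocks !![0, -1; 1, 0] !![0, -1; 1, 0]
                      !![2*k+1, -k; 3*k+1, 1] !![2*k+1, -(k+1); 3*k+2, -1] with hLinvdef
  set R : Matrix (Fin 2 ⊕ Fin 2) (Fin 2 ⊕ Fin 2) ℤ :=
    Matrix.fromBlocks !![1, 0; 0, 1] !![1, 0; 0, 1]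
                      !![0, 0; 0, 0] !![1, 2; 0, 1] with hRdef
  set Rinv : Matrix (Fin 2 ⊕ Fin 2) (Fin 2 ⊕ Fin 2) ℤ :=
    Matrix.fromBlocks !![1, 0; 0, 1] !![-1, 2; 0, -1]
                      !![0, 0; 0, 0] !![1, -2; 0, 1] with hRinvdef
  set d : Fin 2 ⊕ Fin 2 → ℤ := Sum.elim ![1, 1] ![2*k+1, 3*(2*k+1)] with hddef
  set D : Matrix (Fin 2 ⊕ Fin 2) (Fin 2 ⊕ Fin 2) ℤ := Matrix.diagonal d with hDdef
  have hLL : Linv * L = 1 := by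
    ext i j
    rcases i with i | i <;> rcases j with j | j <;> fin_cases i <;> fin_cases j <;>
      simp [hLdef, hLinvdef, Matrix.mul_apply, Fintype.sum_sum_type,
        Fin.sum_univ_two, Matrix.fromBlocks, Matrix.one_apply] <;> ring
  have hLL' : L * Linv = 1 := mul_eq_one_comm.mpr hLL
  have hRR : R * Rinv = 1 := by
    ext i j
    rcases i with i | i <;> rcases j with j | j <;> fin_cases i <;> fin_cases j <;>
      simp [hRdef, hRinvdef, Matrix.mul_apply, Fintype.sum_sum_type,
        Fin.sum_univ_two, Matrix.fromBlocks, Matrix.one_apply]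
  have hM : Matrix.fromBlocks !![-(2*k+1), -k; -(k+1), -(2*k+1)] !![2*k+1, k+1; k, 2*k+1]
          !![2*k+1, k+1; k, 2*k+1] !![-(2*k+1), -k; -(k+1), -(2*k+1)]
      = L * D * R := by
    ext i j
    rcases i with i | i <;> rcases j with j | j <;> fin_cases i <;> fin_cases j <;>
      simp [hLdef, hRdef, hDdef, hddef, Matrix.mul_apply, Fintype.sum_sum_type,
        Fin.sum_univ_two, Matrix.fromBlocks, Matrix.diagonal_apply] <;> ring
  rw [hM]
  -- the quotient map
  set φ : ((Fin 2 ⊕ Fin 2) → ℤ) →+ ZMod (2*k+1).natAbs × ZMod (3*(2*k+1)).natAbs :=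
    { toFun := fun v => (((Linv.mulVec v (Sum.inr 0) : ℤ) : ZMod (2*k+1).natAbs),
        ((Linv.mulVec v (Sum.inr 1) : ℤ) : ZMod (3*(2*k+1)).natAbs))
      map_zero' := by simp
      map_add' := by
        intro x y
        simp [Matrix.mulVec_add] } with hφdef
  have hφ : ∀ v, φ v = (((Linv.mulVec v (Sum.inr 0) : ℤ) : ZMod (2*k+1).natAbs),
      ((Linv.mulVec v (Sum.inr 1) : ℤ) : ZMod (3*(2*k+1)).natAbs)) := fun _ => rfl
  have hsurj : Function.Surjective φ := by
    rintro ⟨x, y⟩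
    obtain ⟨a, ha⟩ := ZMod.intCast_surjective (n := (2*k+1).natAbs) x
    obtain ⟨b, hb⟩ := ZMod.intCast_surjective (n := (3*(2*k+1)).natAbs) y
    refine ⟨L.mulVec (Sum.elim ![0, 0] ![a, b]), ?_⟩
    rw [hφ, Matrix.mulVec_mulVec, hLL, Matrix.one_mulVec]
    simp [ha, hb]
  have hker : φ.ker = ((L * D * R).mulVecLin.toAddMonoidHom.range) := by
    ext v
    simp only [AddMonoidHom.mem_ker, AddMonoidHom.mem_range, LinearMap.toAddMonoidHom_coe,
      Matrix.mulVecLin_apply, hφ, Prod.mk_eq_zero,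
      ZMod.intCast_zmod_eq_zero_iff_dvd, Int.natAbs_dvd]
    constructor
    · rintro ⟨⟨c0, hc0⟩, ⟨c1, hc1⟩⟩
      refine ⟨Rinv.mulVec (Sum.elim ![Linv.mulVec v (Sum.inl 0), Linv.mulVec v (Sum.inl 1)]
        ![c0, c1]), ?_⟩
      have hDw : D.mulVec (Sum.elim ![Linv.mulVec v (Sum.inl 0), Linv.mulVec v (Sum.inl 1)]
          ![c0, c1]) = Linv.mulVec v := by
        ext i
        rcases i with i | i <;> fin_cases i <;>
          simp [hDdef, Matrix.mulVec_diagonal, hddef, ← hc0, ← hc1]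
      calc (L * D * R).mulVec (Rinv.mulVec (Sum.elim
            ![Linv.mulVec v (Sum.inl 0), Linv.mulVec v (Sum.inl 1)] ![c0, c1]))
          = ((L * D) * (R * Rinv)).mulVec (Sum.elim
            ![Linv.mulVec v (Sum.inl 0), Linv.mulVec v (Sum.inl 1)] ![c0, c1]) := by
            rw [Matrix.mulVec_mulVec, Matrix.mul_assoc (L * D)]
        _ = L.mulVec (D.mulVec (Sum.elim
            ![Linv.mulVec v (Sum.inl 0), Linv.mulVec v (Sum.inl 1)] ![c0, c1])) := by
            rw [hRR, Matrix.mul_one, ← Matrix.mulVec_mulVec]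
        _ = v := by rw [hDw, Matrix.mulVec_mulVec, hLL', Matrix.one_mulVec]
    · rintro ⟨u, rfl⟩
      have h1 : Linv.mulVec ((L * D * R).mulVec u) = D.mulVec (R.mulVec u) := by
        rw [Matrix.mulVec_mulVec, ← Matrix.mul_assoc, ← Matrix.mul_assoc, hLL,
          Matrix.one_mul, ← Matrix.mulVec_mulVec]
      rw [h1]
      constructor
      · exact ⟨R.mulVec u (Sum.inr 0), by simp [hDdef, Matrix.mulVec_diagonal, hddef]⟩
      · exact ⟨R.mulVec u (Sum.inr 1), by simp [hDdef, Matrix.mulVec_diagonal, hddef]⟩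
  rw [← hker]
  exact ⟨QuotientAddGroup.quotientKerEquivOfSurjective φ hsurj⟩
end

section
/- Let F be the free group on x_j^{(k)} for 1 ≤ j ≤ 2g and k ∈ ℤ/d, and suppose given elements u_{i,k}^♯, u_{i,k}^♭ ∈ F (1 ≤ i ≤ 2g, k ∈ ℤ/d) satisfying [u_{1,k}^♭, u_{2,k}^♭]⋯[u_{2g−1,k}^♭, u_{2g,k}^♭] = [u_{1,k}^♯, u_{2,k}^♯]⋯[u_{2g−1,k}^♯, u_{2g,k}^♯] for all k. Set r_{i,k} = u_{i,k}^♯ (u_{i,k+1}^♭)⁻¹, w_{i,k} = Π_{j=1}^i [u_{2j−1,k+1}^♭, u_{2j,k+1}^♭], and W_{i,k} = w_{i−1,k} r_{2i−1,k} w_{i−1,k}⁻¹ · (w_{i−1,k} u_{2i−1,k+1}^♭) r_{2i,k} (w_{i−1,k} u_{2i−1,k+1}^♭)⁻¹ · (w_{i,k} u_{2i,k+1}^♭) r_{2i−1,k}⁻¹ (w_{i,k} u_{2i,k+1}^♭)⁻¹ · w_{i,k} r_{2i,k}⁻¹ w_{i,k}⁻¹. Then Π_{k=1}^d (W_{1,k}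 W_{2,k} ⋯ W_{g,k}) = 1 in F. -/
/-!
Each block `W_{i,k}` collapses to `w_{i-1,k} [u♯_{2i-1,k}, u♯_{2i,k}] w_{i,k}⁻¹`, so the product
over `i` telescopes to `P♯_k P♭_{k+1}⁻¹`, where `P♯_k`, `P♭_k` are the products of commutators of
the `u♯`, `u♭`. Since `P♯_k = P♭_k`, the product over `k ∈ ℤ/d` telescopes once more, around the
cycle, to `1`.
-/

open scoped commutatorElement

theorem List.prod_range_mul_mul_inv {G : Type*} [Group G] (a c : ℕ → G) (n : ℕ) :
    ((List.range n).map fun i => a i * c i * (a (i + 1))⁻¹).prod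
      = a 0 * ((List.range n).map c).prod * (a n)⁻¹ := by
  induction n with
  | zero => simp
  | succ n ih =>
    simp only [List.range_succ, List.map_append, List.prod_append, ih, List.map_cons,
      List.map_nil, List.prod_cons, List.prod_nil, mul_one]
    group

theorem conj_relators_prod_eq_commutator {G : Type*} [Group G] (w s₁ s₂ b₁ b₂ : G) :
    w * (s₁ * b₁⁻¹) * w⁻¹
      * ((w * b₁) * (s₂ * b₂⁻¹) * (w * b₁)⁻¹)
      * ((w * ⁅b₁, b₂⁆ * b₂) * (s₁ * b₁⁻¹)⁻¹ * (w * ⁅b₁, b₂⁆ * b₂)⁻¹)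
      * (w * ⁅b₁, b₂⁆ * (s₂ * b₂⁻¹)⁻¹ * (w * ⁅b₁, b₂⁆)⁻¹)
      = w * ⁅s₁, s₂⁆ * (w * ⁅b₁, b₂⁆)⁻¹ := by
  simp only [commutatorElement_def]
  group

theorem List.prod_range_succ_commutator {G : Type*} [Group G] (u : ℕ → G) (n : ℕ) :
    ((List.range (n + 1)).map fun j => ⁅u (2 * j), u (2 * j + 1)⁆).prod
      = ((List.range n).map fun j => ⁅u (2 * j), u (2 * j + 1)⁆).prod
        * ⁅u (2 * n), u (2 * n + 1)⁆ := by
  simp [List.range_succ]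

theorem branched_cover_identity_general (g d : ℕ)
    (us ub : ℕ → ZMod d → FreeGroup (Fin (2*g) × ZMod d))
    (hcomm : ∀ k : ZMod d,
      ((List.range g).map fun j => ⁅ub (2*j) k, ub (2*j+1) k⁆).prod
        = ((List.range g).map fun j => ⁅us (2*j) k, us (2*j+1) k⁆).prod)
    (r : ℕ → ZMod d → FreeGroup (Fin (2*g) × ZMod d))
    (hr : ∀ i k, r i k = us i k * (ub i (k+1))⁻¹)
    (w : ℕ → ZMod d → FreeGroup (Fin (2*g) × ZMod d))
    (hw : ∀ i k, w i k = ((List.range i).map fun j => ⁅ub (2*j) (k+1), ub (2*j+1) (k+1)⁆).prod)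
    (W : ℕ → ZMod d → FreeGroup (Fin (2*g) × ZMod d))
    (hW : ∀ i k, W i k =
      w (i-1) k * r (2*(i-1)) k * (w (i-1) k)⁻¹
      * ((w (i-1) k * ub (2*(i-1)) (k+1)) * r (2*(i-1)+1) k
          * (w (i-1) k * ub (2*(i-1)) (k+1))⁻¹)
      * ((w i k * ub (2*(i-1)+1) (k+1)) * (r (2*(i-1)) k)⁻¹
          * (w i k * ub (2*(i-1)+1) (k+1))⁻¹)
      * (w i k * (r (2*(i-1)+1) k)⁻¹ * (w i k)⁻¹)) :
    ((List.range d).map fun k =>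
      ((List.range g).map fun i => W (i+1) ((k : ZMod d) + 1)).prod).prod = 1 := by
  set P : ZMod d → FreeGroup (Fin (2*g) × ZMod d) :=
    fun k => ((List.range g).map fun j => ⁅ub (2*j) k, ub (2*j+1) k⁆).prod
  have hblock : ∀ i k, W (i+1) k = w i k * ⁅us (2*i) k, us (2*i+1) k⁆ * (w (i+1) k)⁻¹ := by
    intro i k
    have hw_succ : w (i+1) k = w i k * ⁅ub (2*i) (k+1), ub (2*i+1) (k+1)⁆ := by
      rw [hw, hw]
      exact List.prod_range_succ_commutator (fun j => ub j (k+1)) i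
    rw [hW, Nat.add_sub_cancel, hr, hr, hw_succ]
    exact conj_relators_prod_eq_commutator ..
  have hinner : ∀ k, ((List.range g).map fun i => W (i+1) k).prod = P k * (P (k+1))⁻¹ := by
    intro k
    rw [List.map_congr_left fun i _ => hblock i k, List.prod_range_mul_mul_inv, hw 0, hw g,
      List.range_zero, List.map_nil, List.prod_nil, one_mul, ← hcomm k]
  -- the outer `List.range d` was coerced to `List (ZMod d)` by a monad lift (`flatMap`)
  simp only [hinner, ← div_eq_mul_inv, bind_pure_comp, List.map_eq_map, List.map_map]
  have hcycle := List.prod_range_div' d fun k : ℕ => P ((k : ZMod d) + 1)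
  rw [Nat.cast_zero, ZMod.natCast_self, zero_add, div_self'] at hcycle
  simpa only [Function.comp_def, Nat.cast_succ] using hcycle

/-- The identity among the relations of the presentation of the fundamental group of the
`d`-fold cyclic branched cover of `S³` branched over a knot (Proposition 3.7): in the free
group `F` on `x_j^{(k)}` (`1 ≤ j ≤ 2g`, `k ∈ ℤ/d`), given `u_{i,k}^♯, u_{i,k}^♭ ∈ F` with
`Π_j [u_{2j−1,k}^♭, u_{2j,k}^♭] = Π_j [u_{2j−1,k}^♯, u_{2j,k}^♯]` for all `k`, and
`r_{i,k} = u_{i,k}^♯ (u_{i,k+1}^♭)⁻¹`, `w_{i,k} = Π_{j=1}^i [u_{2j−1,k+1}^♭, u_{2j,k+1}^♭]`,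
the product `Π_{k=1}^d (W_{1,k} ⋯ W_{g,k})` equals `1`.
(The `u`-index `i` is 0-based: `u_{2i−1,k}` is `us (2*(i-1)) k`.) -/
theorem branched_cover_identity (g d : ℕ) (hd : 1 ≤ d)
    (us ub : ℕ → ZMod d → FreeGroup (Fin (2*g) × ZMod d))
    (hcomm : ∀ k : ZMod d,
      ((List.range g).map fun j => ⁅ub (2*j) k, ub (2*j+1) k⁆).prod
        = ((List.range g).map fun j => ⁅us (2*j) k, us (2*j+1) k⁆).prod)
    (r : ℕ → ZMod d → FreeGroup (Fin (2*g) × ZMod d))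
    (hr : ∀ i k, r i k = us i k * (ub i (k+1))⁻¹)
    (w : ℕ → ZMod d → FreeGroup (Fin (2*g) × ZMod d))
    (hw : ∀ i k, w i k = ((List.range i).map fun j => ⁅ub (2*j) (k+1), ub (2*j+1) (k+1)⁆).prod)
    (W : ℕ → ZMod d → FreeGroup (Fin (2*g) × ZMod d))
    (hW : ∀ i k, W i k =
      w (i-1) k * r (2*(i-1)) k * (w (i-1) k)⁻¹
      * ((w (i-1) k * ub (2*(i-1)) (k+1)) * r (2*(i-1)+1) k
          * (w (i-1) k * ub (2*(i-1)) (k+1))⁻¹)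
      * ((w i k * ub (2*(i-1)+1) (k+1)) * (r (2*(i-1)) k)⁻¹
          * (w i k * ub (2*(i-1)+1) (k+1))⁻¹)
      * (w i k * (r (2*(i-1)+1) k)⁻¹ * (w i k)⁻¹)) :
    ((List.range d).map fun k =>
      ((List.range g).map fun i => W (i+1) ((k : ZMod d) + 1)).prod).prod = 1 :=
  branched_cover_identity_general g d us ub hcomm r hr w hw W hW
end
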